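/- arXiv:2401.11287 — 3 statements merged into one kernel-verified Lean document; each statement's English description precedes it below -/
import Mathlib

section
/- If S₁ and S₂ both satisfy the closure property SafePred(S ∪ WinningMoves(S), Uncontrollable(S)) ⊆ S, then their intersection S₁ ∩ S₂ also satisfies it: SafePred((S₁∩S₂) ∪ WinningMoves(S₁∩S₂), Uncontrollable(S₁∩S₂)) ⊆ S₁ ∩ S₂. -/
def Cover {S : Type*} (delay : ℝ → S → S → Prop) (s : S) (δ : ℝ) : Set S :=
  {s'' | ∃ δ', 0 ≤ δ' ∧ δ' ≤ δ ∧ delay δ' s s''}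

def SafePred {S : Type*} (delay : ℝ → S → S → Prop) (S₁ S₂ : Set S) : Set S :=
  {s | ∃ δ, 0 ≤ δ ∧ ∃ s' ∈ S₁, delay δ s s' ∧ Cover delay s δ ∩ S₂ = ∅}

def WinningMoves {S T : Type*} (trans : T → S → S → Prop) (Tc : Set T) (A : Set S) : Set S :=
  {s | ∃ t ∈ Tc, ∃ s' ∈ A, trans t s s'}

def Uncontrollable {S T : Type*} (trans : T → S → S → Prop) (Tu : Set T) (A : Set S) : Set S :=
  {s | ∃ t ∈ Tu, ∃ s', s' ∉ A ∧ trans t s s'}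

/-! `A ↦ SafePred (A ∪ WinningMoves A) (Uncontrollable A)` is monotone, since `SafePred` is monotone
in its target and antitone in its avoided set, and the prefixed points `F A ⊆ A` of any monotone
operator `F` are closed under intersection. -/

section Monotonicity

variable {S T : Type*}

theorem safePred_mono (delay : ℝ → S → S → Prop) {A A' B B' : Set S} (hA : A ⊆ A')
    (hB : B' ⊆ B) : SafePred delay A B ⊆ SafePred delay A' B' := by
  rintro s ⟨δ, hδ, s', hs', hd, hcov⟩
  exact ⟨δ, hδ, s', hA hs', hd, Set.subset_empty_iff.mp (hcov ▸ Set.inter_subset_inter_right _ hB)⟩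

theorem winningMoves_mono (trans : T → S → S → Prop) (Tc : Set T) :
    Monotone (WinningMoves trans Tc) := by
  rintro A B hAB s ⟨t, ht, s', hs', htr⟩
  exact ⟨t, ht, s', hAB hs', htr⟩

theorem uncontrollable_anti (trans : T → S → S → Prop) (Tu : Set T) :
    Antitone (Uncontrollable trans Tu) := by
  rintro A B hAB s ⟨t, ht, s', hs', htr⟩
  exact ⟨t, ht, s', fun h => hs' (hAB h), htr⟩

theorem monotone_safePred_winningMoves_uncontrollable (delay : ℝ → S → S → Prop)
    (trans : T → S → S → Prop) (Tc Tu : Set T) :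
    Monotone fun A : Set S =>
      SafePred delay (A ∪ WinningMoves trans Tc A) (Uncontrollable trans Tu A) :=
  fun _ _ hAB =>
    safePred_mono delay (Set.union_subset_union hAB (winningMoves_mono trans Tc hAB))
      (uncontrollable_anti trans Tu hAB)

end Monotonicity

/-- The closure property `SafePred(S ∪ WinningMoves(S), Uncontrollable(S)) ⊆ S`
is stable under intersection. -/
theorem closure_inter {S T : Type*}
    (delay : ℝ → S → S → Prop) (trans : T → S → S → Prop) (Tc Tu : Set T)
    (S₁ S₂ : Set S)
    (h₁ : SafePred delay (S₁ ∪ WinningMoves trans Tc S₁) (Uncontrollable trans Tu S₁) ⊆ S₁)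
    (h₂ : SafePred delay (S₂ ∪ WinningMoves trans Tc S₂) (Uncontrollable trans Tu S₂) ⊆ S₂) :
    SafePred delay ((S₁ ∩ S₂) ∪ WinningMoves trans Tc (S₁ ∩ S₂))
      (Uncontrollable trans Tu (S₁ ∩ S₂)) ⊆ S₁ ∩ S₂ :=
  ((monotone_safePred_winningMoves_uncontrollable delay trans Tc Tu).map_inf_le S₁ S₂).trans
    (Set.inter_subset_inter h₁ h₂)
end

section
/- For zones (convex sets) S₁, S₂ of valuations, SafePred(S₁, S₂) = (Pred_t(S₁) \ Pred_t(S₂)) ∪ Pred_t((S₁ ∩ Pred_t(S₂)) \ S₂), where Pred_t denotes the temporal (time-)predecessor operator. -/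
/-- States are pairs of a clock valuation and a parameter valuation;
a delay adds `δ` uniformly to all clocks and keeps the parameters. -/
def addDelay {X P : Type*} (s : (X → ℝ) × P) (δ : ℝ) : (X → ℝ) × P :=
  (fun x => s.1 x + δ, s.2)

/-- Temporal (time-)predecessor operator. -/
def PredT {X P : Type*} (A : Set ((X → ℝ) × P)) : Set ((X → ℝ) × P) :=
  {s | ∃ δ, 0 ≤ δ ∧ addDelay s δ ∈ A}

/-- `SafePred S₁ S₂` : states that can delay into `S₁` while the whole
covered delay segment avoids `S₂`. -/
def SafePredT {X P : Type*} (S₁ S₂ : Set ((X → ℝ) × P)) : Set ((X → ℝ) × P) :=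
  {s | ∃ δ, 0 ≤ δ ∧ addDelay s δ ∈ S₁ ∧ ∀ δ', 0 ≤ δ' → δ' ≤ δ → addDelay s δ' ∉ S₂}

/-- A zone is delay-convex: membership along a delay line is an interval. -/
def DelayConvex {X P : Type*} (A : Set ((X → ℝ) × P)) : Prop :=
  ∀ (s : (X → ℝ) × P) (δ₁ δ δ₂ : ℝ), δ₁ ≤ δ → δ ≤ δ₂ →
    addDelay s δ₁ ∈ A → addDelay s δ₂ ∈ A → addDelay s δ ∈ A

/-!
A safe delay from `s` into `S₁` either never meets `S₂` at all, or stops strictly before the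
first time `S₂` is reached, and then ends in `S₁ \ S₂` at a state that can still reach `S₂`.
Conversely, if the end point `s + δ` lies outside `S₂` but can reach `S₂` later, then the delay
segment `[s, s + δ]` avoids `S₂`: by convexity along the delay line, a visit to `S₂` before `δ`
together with the later one would force `s + δ ∈ S₂`.
-/

section SafePred

variable {X P : Type*}

lemma addDelay_addDelay (s : (X → ℝ) × P) (a b : ℝ) :
    addDelay (addDelay s a) b = addDelay s (a + b) := by
  simp only [addDelay, add_assoc]

lemma addDelay_mem_predT_of_le {A : Set ((X → ℝ) × P)} {s : (X → ℝ) × P} {δ ε : ℝ}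
    (hδε : δ ≤ ε) (hε : addDelay s ε ∈ A) : addDelay s δ ∈ PredT A :=
  ⟨ε - δ, sub_nonneg.mpr hδε, by rwa [addDelay_addDelay, add_sub_cancel]⟩

lemma safePredT_subset (S₁ S₂ : Set ((X → ℝ) × P)) :
    SafePredT S₁ S₂ ⊆ (PredT S₁ \ PredT S₂) ∪ PredT ((S₁ ∩ PredT S₂) \ S₂) := by
  rintro s ⟨δ, hδ, hS₁, hsafe⟩
  by_cases hreach : s ∈ PredT S₂
  · obtain ⟨ε, hε, hεS₂⟩ := hreach
    have hδε : δ ≤ ε := le_of_not_ge fun hεδ => hsafe ε hε hεδ hεS₂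
    exact Or.inr ⟨δ, hδ, ⟨hS₁, addDelay_mem_predT_of_le hδε hεS₂⟩, hsafe δ hδ le_rfl⟩
  · exact Or.inl ⟨⟨δ, hδ, hS₁⟩, hreach⟩

lemma predT_diff_predT_subset_safePredT (S₁ S₂ : Set ((X → ℝ) × P)) :
    PredT S₁ \ PredT S₂ ⊆ SafePredT S₁ S₂ := by
  rintro s ⟨⟨δ, hδ, hS₁⟩, hreach⟩
  exact ⟨δ, hδ, hS₁, fun δ' hδ' _ hS₂ => hreach ⟨δ', hδ', hS₂⟩⟩

lemma predT_diff_subset_safePredT (S₁ : Set ((X → ℝ) × P)) {S₂ : Set ((X → ℝ) × P)}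
    (h₂ : DelayConvex S₂) : PredT ((S₁ ∩ PredT S₂) \ S₂) ⊆ SafePredT S₁ S₂ := by
  rintro s ⟨δ, hδ, ⟨hS₁, ε, hε, hεS₂⟩, hδS₂⟩
  rw [addDelay_addDelay] at hεS₂
  exact ⟨δ, hδ, hS₁, fun δ' _ hδ'δ hδ'S₂ =>
    hδS₂ (h₂ s δ' δ (δ + ε) hδ'δ (le_add_of_nonneg_right hε) hδ'S₂ hεS₂)⟩

end SafePred

theorem safePred_zones_general {X P : Type*} (S₁ S₂ : Set ((X → ℝ) × P))
    (h₂ : DelayConvex S₂) :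
    SafePredT S₁ S₂ =
      (PredT S₁ \ PredT S₂) ∪ PredT ((S₁ ∩ PredT S₂) \ S₂) :=
  (safePredT_subset S₁ S₂).antisymm <|
    Set.union_subset (predT_diff_predT_subset_safePredT S₁ S₂)
      (predT_diff_subset_safePredT S₁ h₂)

/-- For convex zones `S₁`, `S₂`:
`SafePred(S₁,S₂) = (Pred_t(S₁) \ Pred_t(S₂)) ∪ Pred_t((S₁ ∩ Pred_t(S₂)) \ S₂)`. -/
theorem safePred_zones {X P : Type*} (S₁ S₂ : Set ((X → ℝ) × P))
    (h₁ : DelayConvex S₁) (h₂ : DelayConvex S₂) :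
    SafePredT S₁ S₂ =
      (PredT S₁ \ PredT S₂) ∪ PredT ((S₁ ∩ PredT S₂) \ S₂) :=
  safePred_zones_general S₁ S₂ h₂
end

section
/- For finite unions of convex zones, SafePred(⋃ᵢ S₁ᵢ, ⋃ⱼ S₂ⱼ) = ⋃ᵢ (Pred_t(S₁ᵢ) ∩ ⋂ⱼ SafePred(S₁ᵢ, S₂ⱼ)). -/
open Set

section SafePred

variable {X P : Type*}

theorem safePredT_subset_predT (A B : Set ((X → ℝ) × P)) : SafePredT A B ⊆ PredT A :=
  fun _ ⟨δ, hδ, hA, _⟩ => ⟨δ, hδ, hA⟩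

theorem safePredT_anti_right (A : Set ((X → ℝ) × P)) {B C : Set ((X → ℝ) × P)} (hBC : B ⊆ C) :
    SafePredT A C ⊆ SafePredT A B :=
  fun _ ⟨δ, hδ, hA, hC⟩ => ⟨δ, hδ, hA, fun δ' h0 hle hB => hC δ' h0 hle (hBC hB)⟩

theorem safePredT_iUnion_left {I : Type*} (S : I → Set ((X → ℝ) × P)) (B : Set ((X → ℝ) × P)) :
    SafePredT (⋃ i, S i) B = ⋃ i, SafePredT (S i) B := by
  ext s
  simp only [SafePredT, mem_ofPred_eq, mem_iUnion]
  constructor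
  · rintro ⟨δ, hδ, ⟨i, hi⟩, hB⟩
    exact ⟨i, δ, hδ, hi, hB⟩
  · rintro ⟨i, δ, hδ, hi, hB⟩
    exact ⟨δ, hδ, ⟨i, hi⟩, hB⟩

theorem safePredT_iUnion_right {J : Type*} [Finite J] (A : Set ((X → ℝ) × P))
    (S : J → Set ((X → ℝ) × P)) :
    SafePredT A (⋃ j, S j) = PredT A ∩ ⋂ j, SafePredT A (S j) := by
  refine Subset.antisymm (subset_inter (safePredT_subset_predT _ _)
    (subset_iInter fun j => safePredT_anti_right A (subset_iUnion S j))) ?_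
  rintro s ⟨hpred, hsafe⟩
  rcases isEmpty_or_nonempty J with hJ | hJ
  · obtain ⟨δ, hδ, hA⟩ := hpred
    exact ⟨δ, hδ, hA, by simp⟩
  · -- the least of the finitely many witness delays is safe for every `S j` at once
    choose δ hδ hA hS using mem_iInter.mp hsafe
    obtain ⟨j₀, hmin⟩ := Finite.exists_min δ
    refine ⟨δ j₀, hδ j₀, hA j₀, fun δ' h0 hle hmem => ?_⟩
    obtain ⟨j, hj⟩ := mem_iUnion.mp hmem
    exact hS j δ' h0 (hle.trans (hmin j)) hj

end SafePred

theorem safePred_unions_general {X P I J : Type*} [Finite J]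
    (S₁ : I → Set ((X → ℝ) × P)) (S₂ : J → Set ((X → ℝ) × P)) :
    SafePredT (⋃ i, S₁ i) (⋃ j, S₂ j) =
      ⋃ i, (PredT (S₁ i) ∩ ⋂ j, SafePredT (S₁ i) (S₂ j)) := by
  rw [safePredT_iUnion_left]
  exact iUnion_congr fun i => safePredT_iUnion_right (S₁ i) S₂

/-- For finite unions of convex zones:
`SafePred(⋃ᵢ S₁ᵢ, ⋃ⱼ S₂ⱼ) = ⋃ᵢ (Pred_t(S₁ᵢ) ∩ ⋂ⱼ SafePred(S₁ᵢ, S₂ⱼ))`. -/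
theorem safePred_unions {X P I J : Type*} [Finite I] [Finite J]
    (S₁ : I → Set ((X → ℝ) × P)) (S₂ : J → Set ((X → ℝ) × P))
    (h₁ : ∀ i, DelayConvex (S₁ i)) (h₂ : ∀ j, DelayConvex (S₂ j)) :
    SafePredT (⋃ i, S₁ i) (⋃ j, S₂ j) =
      ⋃ i, (PredT (S₁ i) ∩ ⋂ j, SafePredT (S₁ i) (S₂ j)) :=
  safePred_unions_general S₁ S₂
end
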